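/- Let A ∈ ℝ^{m×n} and r ≤ min(m,n). The minimum of ‖A − B‖_F² over matrices B of rank at most r equals ‖A‖_F² − ∑_{i=1}^r σ_i(A)², i.e., the best rank-r approximation error in squared Frobenius norm is the sum of the squares of the trailing singular values of A. -/

import Mathlib

open Matrix BigOperators Finset

/-- Squared Frobenius norm of a real matrix. -/
noncomputable def frobSq {m n : ℕ} (A : Matrix (Fin m) (Fin n) ℝ) : ℝ :=
  ∑ i, ∑ j, (A i j) ^ 2

/-- Squares of the singular values of `A`, in decreasing order, indexed by `ℕ`
(equal to `0` beyond the number of columns): the eigenvalues of `Aᵀ * A` sorted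
decreasingly. -/
noncomputable def sValSq {m n : ℕ} (A : Matrix (Fin m) (Fin n) ℝ) : ℕ → ℝ :=
  fun i =>
    if h : i < n then
      (Matrix.isHermitian_conjTranspose_mul_self A : (Aᵀ * A).IsHermitian).eigenvalues
        ((Tuple.sort (fun j => -(Matrix.isHermitian_conjTranspose_mul_self A : (Aᵀ * A).IsHermitian).eigenvalues j)) ⟨i, h⟩)
    else 0

/-- The `i`-th largest singular value (0-indexed) of a real matrix. -/
noncomputable def sVal {m n : ℕ} (A : Matrix (Fin m) (Fin n) ℝ) : ℕ → ℝ :=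
  fun i => Real.sqrt (sValSq A i)

lemma frobSq_nonneg {m n : ℕ} (X : Matrix (Fin m) (Fin n) ℝ) : 0 ≤ frobSq X :=
  Finset.sum_nonneg fun _ _ => Finset.sum_nonneg fun _ _ => sq_nonneg _

lemma sum_dite_range {n : ℕ} (f : Fin n → ℝ) (r : ℕ) :
    ∑ i ∈ Finset.range r, (if h : i < n then f ⟨i, h⟩ else 0)
      = ∑ j ∈ Finset.univ.filter (fun j : Fin n => (j : ℕ) < r), f j := by
  rw [Finset.sum_filter]
  have step : (∑ j : Fin n, if (j:ℕ) < r then f j else 0)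
      = ∑ i ∈ Finset.range n, (if h : i < n then (if i < r then f ⟨i, h⟩ else 0) else 0) := by
    rw [← Fin.sum_univ_eq_sum_range]
    refine Finset.sum_congr rfl fun j _ => ?_
    simp [j.isLt]
  rw [step]
  by_cases h : r ≤ n
  · rw [← Finset.sum_subset (Finset.range_subset_range.2 h)]
    · refine Finset.sum_congr rfl fun i hi => ?_
      have hir : i < r := Finset.mem_range.1 hi
      have hin : i < n := lt_of_lt_of_le hir h
      simp [hin, hir]
    · intro i _ hi
      have : ¬ i < r := by simpa using hi
      simp [this]
  · push_neg at h
    rw [← Finset.sum_subset (Finset.range_subset_range.2 h.le) (fun i _ hi => by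
      have : ¬ i < n := by simpa using hi
      simp [this])]
    refine Finset.sum_congr rfl fun i hi => ?_
    have hin : i < n := Finset.mem_range.1 hi
    simp [hin, lt_of_lt_of_le hin h.le]

lemma card_filter_lt {n r : ℕ} (h : r ≤ n) :
    (Finset.univ.filter (fun j : Fin n => (j : ℕ) < r)).card = r := by
  rcases lt_or_eq_of_le h with h' | h'
  · have heq : Finset.univ.filter (fun j : Fin n => (j : ℕ) < r) = Finset.Iio (⟨r, h'⟩ : Fin n) := by
      ext j; simp [Fin.lt_def]
    rw [heq, Fin.card_Iio]
  · subst h'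
    have heq : Finset.univ.filter (fun j : Fin r => (j : ℕ) < r) = Finset.univ := by
      ext j; simp [j.isLt]
    rw [heq, Finset.card_univ, Fintype.card_fin]

lemma kyfan {n : ℕ} (ν t : Fin n → ℝ) (r : ℕ)
    (hν0 : ∀ j, 0 ≤ ν j) (hmono : ∀ i j : Fin n, i ≤ j → ν j ≤ ν i)
    (ht0 : ∀ j, 0 ≤ t j) (ht1 : ∀ j, t j ≤ 1) (hsum : ∑ j, t j ≤ (r : ℝ)) :
    ∑ j, ν j * t j ≤ ∑ j ∈ Finset.univ.filter (fun j : Fin n => (j : ℕ) < r), ν j := by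
  by_cases hrn : n ≤ r
  · have hfil : Finset.univ.filter (fun j : Fin n => (j : ℕ) < r) = Finset.univ := by
      ext j; simp [lt_of_lt_of_le j.isLt hrn]
    rw [hfil]
    refine Finset.sum_le_sum fun j _ => ?_
    nlinarith [hν0 j, ht0 j, ht1 j]
  · push_neg at hrn
    set c := ν ⟨r, hrn⟩ with hc
    have hc0 : 0 ≤ c := hν0 _
    have key : ∀ j : Fin n,
        ν j * t j ≤ (if (j:ℕ) < r then ν j else 0) + c * t j - c * (if (j:ℕ) < r then 1 else 0) := by
      intro j
      by_cases hj : (j:ℕ) < r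
      · have hle : c ≤ ν j := hmono j ⟨r, hrn⟩ (by exact Fin.le_def.2 hj.le)
        simp only [hj, if_pos]
        nlinarith [ht1 j]
      · have hle : ν j ≤ c := hmono ⟨r, hrn⟩ j (by exact Fin.le_def.2 (not_lt.1 hj))
        simp only [hj, if_neg, not_false_iff]
        nlinarith [ht0 j]
    calc ∑ j, ν j * t j
        ≤ ∑ j : Fin n, ((if (j:ℕ) < r then ν j else 0) + c * t j - c * (if (j:ℕ) < r then 1 else 0)) :=
          Finset.sum_le_sum fun j _ => key j
      _ = (∑ j ∈ Finset.univ.filter (fun j : Fin n => (j : ℕ) < r), ν j) + c * (∑ j, t j) - c * r := by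
          rw [Finset.sum_sub_distrib, Finset.sum_add_distrib, ← Finset.mul_sum, ← Finset.mul_sum,
            ← Finset.sum_filter, ← Finset.sum_filter]
          have : ∑ j ∈ Finset.univ.filter (fun j : Fin n => (j : ℕ) < r), (1:ℝ) = r := by
            rw [Finset.sum_const, card_filter_lt hrn.le]; simp
          rw [this]
      _ ≤ ∑ j ∈ Finset.univ.filter (fun j : Fin n => (j : ℕ) < r), ν j := by nlinarith

lemma frobSq_eq_trace {m n : ℕ} (X : Matrix (Fin m) (Fin n) ℝ) :
    frobSq X = Matrix.trace (Xᴴ * X) := by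
  unfold frobSq
  rw [Matrix.trace, Finset.sum_comm]
  refine Finset.sum_congr rfl fun j _ => ?_
  simp [Matrix.mul_apply, Matrix.diag, Matrix.conjTranspose_apply, sq]

lemma trace_proj {m n : ℕ} (X : Matrix (Fin m) (Fin n) ℝ) (Q : Matrix (Fin n) (Fin n) ℝ)
    (hQs : Qᴴ = Q) (hQi : Q * Q = Q) :
    ((X * Q)ᴴ * (X * Q)).trace = ((Xᴴ * X) * Q).trace := by
  rw [conjTranspose_mul, hQs]
  simp only [← Matrix.mul_assoc]
  rw [Matrix.trace_mul_cycle (Q * Xᴴ) X Q]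
  simp only [← Matrix.mul_assoc]
  rw [hQi, Matrix.mul_assoc, Matrix.trace_mul_comm]

lemma frob_split {m n : ℕ} (X : Matrix (Fin m) (Fin n) ℝ) (Q : Matrix (Fin n) (Fin n) ℝ)
    (hQs : Qᴴ = Q) (hQi : Q * Q = Q) :
    frobSq X = frobSq (X * Q) + frobSq (X * (1 - Q)) := by
  have hRs : (1 - Q)ᴴ = 1 - Q := by
    rw [conjTranspose_sub, conjTranspose_one, hQs]
  have hRi : (1 - Q) * (1 - Q) = 1 - Q := by
    have expand : (1 - Q) * (1 - Q) = 1 - Q - Q + Q * Q := by noncomm_ring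
    rw [expand, hQi]; abel
  rw [frobSq_eq_trace, frobSq_eq_trace, frobSq_eq_trace, trace_proj X Q hQs hQi,
    trace_proj X (1 - Q) hRs hRi, ← Matrix.trace_add, ← Matrix.mul_add]
  simp

lemma dot_self_nonneg {n : ℕ} (v : Fin n → ℝ) : 0 ≤ v ⬝ᵥ v :=
  Finset.sum_nonneg fun _ _ => mul_self_nonneg _

lemma dot_mulVec_nonneg {n : ℕ} (Q : Matrix (Fin n) (Fin n) ℝ)
    (hQt : Qᵀ = Q) (hQi : Q * Q = Q) (v : Fin n → ℝ) : 0 ≤ v ⬝ᵥ (Q *ᵥ v) := by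
  have h : v ⬝ᵥ (Q *ᵥ v) = (Q *ᵥ v) ⬝ᵥ (Q *ᵥ v) := by
    conv_lhs => rw [← hQi]
    rw [← Matrix.mulVec_mulVec, Matrix.dotProduct_mulVec]
    congr 1
    conv_lhs => rw [← hQt]
    rw [Matrix.vecMul_transpose]
  rw [h]; exact dot_self_nonneg _

section ConjD
variable {n : ℕ} (V : Matrix (Fin n) (Fin n) ℝ)

lemma conjd_mul (hV1 : star V * V = 1) (e f : Fin n → ℝ) :
    (V * diagonal e * star V) * (V * diagonal f * star V)
      = V * diagonal (fun j => e j * f j) * star V := by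
  calc (V * diagonal e * star V) * (V * diagonal f * star V)
      = V * diagonal e * (star V * V * (diagonal f * star V)) := by
        simp only [Matrix.mul_assoc]
    _ = V * (diagonal e * diagonal f) * star V := by
        rw [hV1, Matrix.one_mul]; simp only [Matrix.mul_assoc]
    _ = V * diagonal (fun j => e j * f j) * star V := by
        rw [diagonal_mul_diagonal]

lemma trace_conjd (hV1 : star V * V = 1) (e : Fin n → ℝ) :
    (V * diagonal e * star V).trace = ∑ j, e j := by
  rw [Matrix.trace_mul_comm, ← Matrix.mul_assoc, hV1, Matrix.one_mul, Matrix.trace_diagonal]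

lemma conjd_conjTranspose (e : Fin n → ℝ) :
    (V * diagonal e * star V)ᴴ = V * diagonal e * star V := by
  rw [conjTranspose_mul, conjTranspose_mul]
  simp [Matrix.star_eq_conjTranspose, diagonal_conjTranspose, Matrix.mul_assoc]

lemma one_eq_conjd (hV2 : V * star V = 1) :
    (1 : Matrix (Fin n) (Fin n) ℝ) = V * diagonal (fun _ => 1) * star V := by
  rw [diagonal_one, Matrix.mul_one, hV2]

end ConjD

lemma exists_proj {m n : ℕ} (B : Matrix (Fin m) (Fin n) ℝ) (r : ℕ) (hB : B.rank ≤ r) :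
    ∃ Q : Matrix (Fin n) (Fin n) ℝ, Qᵀ = Q ∧ Q * Q = Q ∧ B * Q = B ∧ Q.trace ≤ (r : ℝ) := by
  classical
  set spanRows : Submodule ℝ (Fin n → ℝ) := Submodule.span ℝ (Set.range fun i => B i) with hsr
  have hfr : Module.finrank ℝ spanRows ≤ r := by
    have h1 : Bᵀ.rank = Module.finrank ℝ (Submodule.span ℝ (Set.range Bᵀᵀ)) :=
      Matrix.rank_eq_finrank_span_cols Bᵀ
    rw [Matrix.transpose_transpose, Matrix.rank_transpose] at h1
    rw [hsr]
    have hre : (Set.range fun i => B i) = Set.range B := by rfl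
    rw [hre, ← h1]
    exact hB
  -- move to EuclideanSpace
  set ee : EuclideanSpace ℝ (Fin n) ≃ₗ[ℝ] (Fin n → ℝ) := WithLp.linearEquiv 2 ℝ (Fin n → ℝ) with hee
  set W : Submodule ℝ (EuclideanSpace ℝ (Fin n)) := spanRows.map (ee.symm : (Fin n → ℝ) →ₗ[ℝ] EuclideanSpace ℝ (Fin n)) with hW
  have hWfr : Module.finrank ℝ W = Module.finrank ℝ spanRows :=
    LinearEquiv.finrank_map_eq ee.symm spanRows
  set s := Module.finrank ℝ W with hs
  set obas := stdOrthonormalBasis ℝ W with hob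
  set U : Fin s → (Fin n → ℝ) := fun k => ee ((obas k : EuclideanSpace ℝ (Fin n))) with hU
  have horth : ∀ k l, U k ⬝ᵥ U l = if k = l then 1 else 0 := by
    intro k l
    have h := (orthonormal_iff_ite.mp obas.orthonormal) k l
    rw [Submodule.coe_inner] at h
    rw [PiLp.inner_apply] at h
    simp only [RCLike.inner_apply, conj_trivial] at h
    rw [← h, dotProduct]
    exact Finset.sum_congr rfl fun x _ => mul_comm _ _
  have hspanU : spanRows = Submodule.span ℝ (Set.range U) := by
    have h1 : Submodule.span ℝ (Set.range (fun k => ((obas k : W) : EuclideanSpace ℝ (Fin n)))) = W := by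
      have hb : Submodule.span ℝ (Set.range obas.toBasis) = (⊤ : Submodule ℝ W) :=
        Module.Basis.span_eq obas.toBasis
      have := congrArg (Submodule.map W.subtype) hb
      rw [Submodule.map_span, Submodule.map_subtype_top] at this
      have himg : ⇑W.subtype '' Set.range ⇑obas.toBasis
          = Set.range (fun k => ((obas k : W) : EuclideanSpace ℝ (Fin n))) := by
        rw [← Set.range_comp]
        ext x
        simp [Function.comp, OrthonormalBasis.coe_toBasis]
      rw [himg] at this
      exact this
    have h2 : Submodule.span ℝ (Set.range U) = W.map (ee : EuclideanSpace ℝ (Fin n) →ₗ[ℝ] (Fin n → ℝ)) := by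
      rw [← h1, Submodule.map_span, ← Set.range_comp]
      rfl
    rw [h2, hW]
    ext x
    simp only [Submodule.mem_map]
    constructor
    · intro hx
      exact ⟨ee.symm x, ⟨x, hx, rfl⟩, by simp⟩
    · rintro ⟨y, ⟨z, hz, rfl⟩, rfl⟩
      simpa using hz
  set Q : Matrix (Fin n) (Fin n) ℝ := Matrix.of (fun i j => ∑ k, U k i * U k j) with hQ
  have hQapp : ∀ i j, Q i j = ∑ k, U k i * U k j := fun i j => rfl
  have hQsym : ∀ i j, Q i j = Q j i := by
    intro i j; rw [hQapp, hQapp]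
    exact Finset.sum_congr rfl fun k _ => mul_comm _ _
  have hQt : Qᵀ = Q := by
    ext i j; rw [Matrix.transpose_apply]; exact hQsym j i
  have hQi : Q * Q = Q := by
    ext i j
    rw [Matrix.mul_apply, hQapp]
    calc ∑ p, Q i p * Q p j
        = ∑ p, ∑ k, ∑ l, (U k i * U k p) * (U l p * U l j) := by
          refine Finset.sum_congr rfl fun p _ => ?_
          rw [hQapp, hQapp, Finset.sum_mul_sum]
      _ = ∑ k, ∑ l, (U k i * U l j) * (U k ⬝ᵥ U l) := by
          rw [Finset.sum_comm]
          refine Finset.sum_congr rfl fun k _ => ?_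
          rw [Finset.sum_comm]
          refine Finset.sum_congr rfl fun l _ => ?_
          rw [dotProduct, Finset.mul_sum]
          exact Finset.sum_congr rfl fun p _ => by ring
      _ = ∑ k, U k i * U k j := by
          refine Finset.sum_congr rfl fun k _ => ?_
          rw [Finset.sum_congr rfl (fun l (_ : l ∈ Finset.univ) => by rw [horth k l])]
          simp
  have hfix : ∀ k, Q *ᵥ U k = U k := by
    intro k
    funext j
    rw [Matrix.mulVec, dotProduct]
    calc ∑ p, Q j p * U k p
        = ∑ p, ∑ l, U l j * (U l p * U k p) := by
          refine Finset.sum_congr rfl fun p _ => ?_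
          rw [hQapp, Finset.sum_mul]
          exact Finset.sum_congr rfl fun l _ => by ring
      _ = ∑ l, (U l j) * (U l ⬝ᵥ U k) := by
          rw [Finset.sum_comm]
          refine Finset.sum_congr rfl fun l _ => ?_
          rw [dotProduct, Finset.mul_sum]
      _ = U k j := by
          rw [Finset.sum_congr rfl (fun l (_ : l ∈ Finset.univ) => by rw [horth l k])]
          simp
  have hBQ : B * Q = B := by
    have hfixall : ∀ x ∈ spanRows, Q *ᵥ x = x := by
      intro x hx
      have hle : spanRows ≤ LinearMap.eqLocus (Matrix.mulVecLin Q) LinearMap.id := by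
        rw [hspanU]
        rw [Submodule.span_le]
        rintro _ ⟨k, rfl⟩
        simp only [SetLike.mem_coe, LinearMap.mem_eqLocus, Matrix.mulVecLin_apply,
          LinearMap.id_apply]
        exact hfix k
      have := hle hx
      simpa only [LinearMap.mem_eqLocus, Matrix.mulVecLin_apply, LinearMap.id_apply] using this
    ext i j
    have hrow : Q *ᵥ (B i) = B i :=
      hfixall (B i) (Submodule.subset_span ⟨i, rfl⟩)
    have := congrFun hrow j
    rw [Matrix.mulVec, dotProduct] at this
    rw [Matrix.mul_apply]
    rw [← this]
    exact Finset.sum_congr rfl fun p _ => by rw [hQsym j p]; ring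
  have htr : Q.trace ≤ (r : ℝ) := by
    have : Q.trace = (s : ℝ) := by
      rw [Matrix.trace]
      have : ∀ j, Q.diag j = ∑ k, U k j * U k j := fun j => rfl
      calc ∑ j, Q.diag j = ∑ j, ∑ k, U k j * U k j := Finset.sum_congr rfl fun j _ => this j
        _ = ∑ k, (U k ⬝ᵥ U k) := by rw [Finset.sum_comm]; rfl
        _ = ∑ k : Fin s, (1 : ℝ) := Finset.sum_congr rfl fun k _ => by rw [horth k k]; simp
        _ = (s : ℝ) := by simp
    rw [this]
    have hsr2 : s ≤ r := le_of_eq_of_le hWfr hfr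
    exact_mod_cast hsr2
  exact ⟨Q, hQt, hQi, hBQ, htr⟩


theorem stmt_19 {m n : ℕ} (A : Matrix (Fin m) (Fin n) ℝ)
    (r : ℕ) (hr : r ≤ min m n) :
    IsLeast {x : ℝ | ∃ B : Matrix (Fin m) (Fin n) ℝ, B.rank ≤ r ∧ x = frobSq (A - B)}
      (frobSq A - ∑ i ∈ Finset.range r, (sVal A i) ^ 2) := by
  classical
  have hA : (Aᴴ * A).IsHermitian := Matrix.isHermitian_conjTranspose_mul_self A
  set μ : Fin n → ℝ := hA.eigenvalues with hμdef
  set σp : Equiv.Perm (Fin n) := Tuple.sort (fun j => -μ j) with hσdef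
  set V : Matrix (Fin n) (Fin n) ℝ := (hA.eigenvectorUnitary : Matrix (Fin n) (Fin n) ℝ) with hVdef
  have hV1 : star V * V = 1 := by
    rw [hVdef]
    exact Matrix.mem_unitaryGroup_iff'.mp hA.eigenvectorUnitary.2
  have hV2 : V * star V = 1 := by
    rw [hVdef]
    exact Matrix.mem_unitaryGroup_iff.mp hA.eigenvectorUnitary.2
  have hspec : Aᴴ * A = V * diagonal μ * star V := by
    conv_lhs => rw [hA.spectral_theorem]
    rfl
  have hμ0 : ∀ j, 0 ≤ μ j := fun j =>
    Matrix.eigenvalues_conjTranspose_mul_self_nonneg A j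
  have hmono : ∀ i j : Fin n, i ≤ j → μ (σp j) ≤ μ (σp i) := by
    intro i j hij
    have h := Tuple.monotone_sort (fun j => -μ j) hij
    simp only [Function.comp_apply] at h
    rw [← hσdef] at h
    linarith
  -- the trace of Aᴴ * A is frobSq A
  have htrM : (Aᴴ * A).trace = frobSq A := by
    rw [frobSq_eq_trace]
  have htrμ : (Aᴴ * A).trace = ∑ j, μ j := by
    rw [hspec, trace_conjd V hV1]
  -- the sum of the top singular values squared
  have hsq : ∀ i : ℕ, (sVal A i) ^ 2 = sValSq A i := by
    intro i
    have h0 : 0 ≤ sValSq A i := by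
      unfold sValSq
      split
      · exact hμ0 _
      · exact le_refl 0
    unfold sVal
    exact Real.sq_sqrt h0
  have hsval_eq : ∑ i ∈ Finset.range r, (sVal A i) ^ 2
      = ∑ j ∈ Finset.univ.filter (fun j : Fin n => (j : ℕ) < r), μ (σp j) := by
    rw [Finset.sum_congr rfl fun i _ => hsq i]
    rw [← sum_dite_range (fun j => μ (σp j)) r]
    rfl
  constructor
  · -- membership: the truncated matrix achieves the bound
    set d : Fin n → ℝ := fun j => if ((σp.symm j : ℕ) < r) then 1 else 0 with hddef
    set Q0 : Matrix (Fin n) (Fin n) ℝ := V * diagonal d * star V with hQ0def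
    refine ⟨A * Q0, ?_, ?_⟩
    · -- rank bound
      calc (A * Q0).rank ≤ Q0.rank := Matrix.rank_mul_le_right A Q0
        _ ≤ (V * diagonal d).rank := Matrix.rank_mul_le_left _ _
        _ ≤ (diagonal d).rank := Matrix.rank_mul_le_right _ _
        _ ≤ r := by
            rw [Matrix.rank_diagonal]
            have hinj : Function.Injective (fun x : {j : Fin n // d j ≠ 0} =>
                (⟨(σp.symm x.1 : ℕ), by
                  by_contra hlt
                  exact x.2 (by
                    show (if ((σp.symm x.1 : ℕ) < r) then (1:ℝ) else 0) = 0
                    exact if_neg hlt)⟩ : Fin r)) := by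
              intro x y hxy
              have h2 : (σp.symm x.1 : ℕ) = (σp.symm y.1 : ℕ) := by simpa using congrArg Fin.val hxy
              apply Subtype.ext
              exact σp.symm.injective (Fin.ext h2)
            have := Fintype.card_le_of_injective _ hinj
            simpa using this
    · -- value
      have hsub : A - A * Q0 = A * (1 - Q0) := by
        rw [Matrix.mul_sub, Matrix.mul_one]
      have h1q : (1 : Matrix (Fin n) (Fin n) ℝ) - Q0
          = V * diagonal (fun j => 1 - d j) * star V := by
        have : diagonal (fun j => 1 - d j)
            = diagonal (fun _ : Fin n => (1:ℝ)) - diagonal d := by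
          rw [← diagonal_sub]
        rw [this, Matrix.mul_sub, Matrix.sub_mul, ← hQ0def, ← one_eq_conjd V hV2]
      have hprod : (A * (1 - Q0))ᴴ * (A * (1 - Q0))
          = V * diagonal (fun j => (1 - d j) * μ j * (1 - d j)) * star V := by
        have e1 : (A * (1 - Q0))ᴴ * (A * (1 - Q0)) = (1 - Q0)ᴴ * (Aᴴ * A) * (1 - Q0) := by
          rw [conjTranspose_mul]
          simp only [Matrix.mul_assoc]
        rw [e1, hspec, h1q, conjd_conjTranspose]
        rw [conjd_mul V hV1, conjd_mul V hV1]
      have hval : frobSq (A - A * Q0) = frobSq A - ∑ j, μ j * d j := by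
        rw [hsub, frobSq_eq_trace, hprod, trace_conjd V hV1, ← htrM, htrμ]
        rw [← Finset.sum_sub_distrib]
        refine Finset.sum_congr rfl fun j _ => ?_
        by_cases hj : ((σp.symm j : ℕ) < r) <;> simp [hddef, hj]
      have hdsum : ∑ j, μ j * d j
          = ∑ j ∈ Finset.univ.filter (fun j : Fin n => (j : ℕ) < r), μ (σp j) := by
        rw [← Equiv.sum_comp σp (fun j => μ j * d j)]
        rw [Finset.sum_filter]
        refine Finset.sum_congr rfl fun j _ => ?_
        by_cases hj : ((j : ℕ) < r) <;> simp [hddef, hj]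
      rw [hval, hdsum, hsval_eq]
  · -- lower bound
    rintro x ⟨B, hBr, rfl⟩
    obtain ⟨Q, hQt, hQi, hBQ, hQtr⟩ := exists_proj B r hBr
    have hQs : Qᴴ = Q := by
      ext i j
      rw [Matrix.conjTranspose_apply, star_trivial]
      conv_rhs => rw [← hQt]
      rw [Matrix.transpose_apply]
    have hRs : ((1 : Matrix (Fin n) (Fin n) ℝ) - Q)ᴴ = 1 - Q := by
      rw [conjTranspose_sub, conjTranspose_one, hQs]
    have hRt : ((1 : Matrix (Fin n) (Fin n) ℝ) - Q)ᵀ = 1 - Q := by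
      rw [transpose_sub, transpose_one, hQt]
    have hRi : ((1 : Matrix (Fin n) (Fin n) ℝ) - Q) * (1 - Q) = 1 - Q := by
      have expand : ((1 : Matrix (Fin n) (Fin n) ℝ) - Q) * (1 - Q) = 1 - Q - Q + Q * Q := by
        noncomm_ring
      rw [expand, hQi]; abel
    -- diagonal entries of star V * Q * V
    set t : Fin n → ℝ := fun j => (star V * Q * V) j j with htdef
    have hdiag : ∀ (R : Matrix (Fin n) (Fin n) ℝ) (j : Fin n),
        (star V * R * V) j j = (fun p => V p j) ⬝ᵥ (R *ᵥ fun p => V p j) := by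
      intro R j
      simp only [Matrix.mul_apply, Matrix.mulVec, dotProduct, Matrix.star_apply, star_trivial,
        Finset.sum_mul, Finset.mul_sum]
      rw [Finset.sum_comm]
      exact Finset.sum_congr rfl fun i _ => Finset.sum_congr rfl fun p _ => by ring
    have ht0 : ∀ j, 0 ≤ t j := by
      intro j
      show 0 ≤ (star V * Q * V) j j
      rw [hdiag Q j]
      exact dot_mulVec_nonneg Q hQt hQi _
    have ht1 : ∀ j, t j ≤ 1 := by
      intro j
      have h0 : 0 ≤ (star V * (1 - Q) * V) j j := by
        rw [hdiag (1 - Q) j]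
        exact dot_mulVec_nonneg (1 - Q) hRt hRi _
      have hsplit : (star V * (1 - Q) * V) j j = 1 - t j := by
        have hmm : star V * (1 - Q) * V = 1 - star V * Q * V := by
          rw [Matrix.mul_sub, Matrix.mul_one, Matrix.sub_mul, hV1]
        rw [hmm, Matrix.sub_apply, Matrix.one_apply_eq]
      linarith [hsplit ▸ h0]
    have hsumt : ∑ j, t j ≤ (r : ℝ) := by
      have : ∑ j, t j = (star V * Q * V).trace := by
        rw [Matrix.trace]; rfl
      rw [this, Matrix.trace_mul_cycle (star V) Q V, hV2, Matrix.one_mul]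
      exact hQtr
    have htraceMQ : ((Aᴴ * A) * Q).trace = ∑ j, μ j * t j := by
      rw [hspec]
      rw [Matrix.mul_assoc (V * diagonal μ), Matrix.trace_mul_comm (V * diagonal μ) (star V * Q)]
      rw [show star V * Q * (V * diagonal μ) = (star V * Q * V) * diagonal μ by
        simp only [Matrix.mul_assoc]]
      rw [Matrix.trace]
      refine Finset.sum_congr rfl fun j _ => ?_
      rw [Matrix.diag_apply, Matrix.mul_diagonal]
      exact mul_comm _ _
    -- kyfan
    have hky : ∑ j, μ j * t j
        ≤ ∑ j ∈ Finset.univ.filter (fun j : Fin n => (j : ℕ) < r), μ (σp j) := by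
      rw [← Equiv.sum_comp σp (fun j => μ j * t j)]
      refine kyfan (fun j => μ (σp j)) (fun j => t (σp j)) r
        (fun j => hμ0 _) hmono (fun j => ht0 _) (fun j => ht1 _) ?_
      rw [Equiv.sum_comp σp t]
      exact hsumt
    -- assemble
    have hsplitF : frobSq (A - B) = frobSq ((A - B) * Q) + frobSq ((A - B) * (1 - Q)) :=
      frob_split (A - B) Q hQs hQi
    have hABQ : (A - B) * (1 - Q) = A * (1 - Q) := by
      rw [Matrix.sub_mul, Matrix.mul_sub, Matrix.mul_sub, Matrix.mul_one, Matrix.mul_one, hBQ]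
      abel
    have hlow : frobSq ((A - B) * (1 - Q)) = frobSq A - ((Aᴴ * A) * Q).trace := by
      rw [hABQ, frobSq_eq_trace, trace_proj A (1 - Q) hRs hRi, Matrix.mul_sub,
        Matrix.mul_one, Matrix.trace_sub, htrM]
    have hfq : 0 ≤ frobSq ((A - B) * Q) := frobSq_nonneg _
    rw [hsval_eq]
    rw [hsplitF, hlow, htraceMQ]
    linarith
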